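/- For every w ∈ 𝔡_1 and every integer s ≥ 0, one has Z_s(z_1 w) = Σ_{ℓ=0}^{s} z_{ℓ+1} Z_{s−ℓ}(w). -/

import Mathlib

open scoped BigOperators

noncomputable section

attribute [local instance 10] Classical.propDecidable

/-- The `q`-integer `[n] = (1 - q^n)/(1 - q)`. -/
def qint (q : ℝ) (n : ℕ) : ℝ := (1 - q ^ n) / (1 - q)

/-- `I(r,n)`: multi-indices of positive integers of depth `r` and weight `n`. -/
def Ifin (r n : ℕ) : Finset (Fin r → ℕ) :=
  (Fintype.piFinset fun _ : Fin r => Finset.Icc 1 n).filter fun c => (∑ i, c i) = n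

/-- `I₀(r,n)`: admissible multi-indices (first entry at least 2). -/
def I0fin (r n : ℕ) : Finset (Fin r → ℕ) :=
  (Ifin r n).filter fun c => ∀ h : 0 < r, 2 ≤ c ⟨0, h⟩

/-- The `q`-analogue of the multiple zeta value,
`ζ_q(α) = Σ_{m_1 > ... > m_r > 0} Π_j q^{(α_j - 1) m_j}/[m_j]^{α_j}`. -/
def zetaQ (q : ℝ) {r : ℕ} (α : Fin r → ℕ) : ℝ :=
  ∑' m : {m : Fin r → ℕ // (∀ i j : Fin r, i < j → m j < m i) ∧ ∀ i, 0 < m i},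
    ∏ j, q ^ ((α j - 1) * m.1 j) / qint q (m.1 j) ^ α j

/-- `K_{b,n}(M) = Σ_{α ∈ I₀(b,n)} Σ_{m_1 > ... > m_{b-1} > m_b = M} Π_j q^{(α_j-1)m_j}/[m_j]^{α_j}`. -/
def Kfun (q : ℝ) (b n M : ℕ) : ℝ :=
  ∑ α ∈ I0fin b n,
    ∑' m : {m : Fin b → ℕ //
        (∀ i j : Fin b, i < j → m j < m i) ∧
          ∀ h : 0 < b, m ⟨b - 1, Nat.sub_lt h Nat.one_pos⟩ = M},
      ∏ j, q ^ ((α j - 1) * m.1 j) / qint q (m.1 j) ^ α j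

/-- `f_ℓ(N,M) = Σ_{N = k_1 > k_2 > ... > k_ℓ > M} (q^{k_1-M}/[k_1-M]) Π_{j=2}^{ℓ} 1/[k_j-M]`. -/
def fS (q : ℝ) (l N M : ℕ) : ℝ :=
  ∑ k ∈ (Fintype.piFinset fun _ : Fin l => Finset.Ioc M N).filter
      (fun k => (∀ i j : Fin l, i < j → k j < k i) ∧ ∀ h : 0 < l, k ⟨0, h⟩ = N),
    ∏ j : Fin l, (if (j : ℕ) = 0 then q ^ (k j - M) else 1) / qint q (k j - M)

/-- `g_{ℓ,β}(M) = Σ_{M = m_1 ≥ m_2 ≥ ... ≥ m_ℓ ≥ 1} (q^{(β-1)m_1}/[m_1]^β) Π_{j=2}^{ℓ} q^{m_j}/[m_j]`. -/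
def gS (q : ℝ) (l β M : ℕ) : ℝ :=
  ∑ m ∈ (Fintype.piFinset fun _ : Fin l => Finset.Icc 1 M).filter
      (fun m => (∀ i j : Fin l, i ≤ j → m j ≤ m i) ∧ ∀ h : 0 < l, m ⟨0, h⟩ = M),
    ∏ j : Fin l, if (j : ℕ) = 0 then q ^ ((β - 1) * m j) / qint q (m j) ^ β
      else q ^ m j / qint q (m j)

/-- `h_{r,ℓ}(N_1,...,N_r,M) = Σ_{c ∈ I(r,ℓ)} (Π_{j=1}^{r-1} f_{c_j}(N_j,N_{j+1})) f_{c_r}(N_r,M)`. -/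
def hS (q : ℝ) (r l : ℕ) (N : Fin r → ℕ) (M : ℕ) : ℝ :=
  ∑ c ∈ Ifin r l,
    ∏ j : Fin r, fS q (c j) (N j) (if h : (j : ℕ) + 1 < r then N ⟨(j : ℕ) + 1, h⟩ else M)

/-- `p(n_1,...,n_s;m) = (q^{n_1-m}/[n_1-m]) Π_{j=2}^{s} 1/[n_j-m]`, with `p(∅;m) = 1`. -/
def pS (q : ℝ) {s : ℕ} (n : Fin s → ℕ) (m : ℕ) : ℝ :=
  ∏ j : Fin s, (if (j : ℕ) = 0 then q ^ (n j - m) else 1) / qint q (n j - m)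

/-! ### The algebras 𝔡, 𝔡_ξ and 𝔡₁ -/

/-- The alphabet `S = {z_k}_{k ≥ 1} ∪ {ξ_k}_{k ≥ 1}`: `Sum.inl k = z_k`, `Sum.inr k = ξ_k`. -/
abbrev Letter : Type := ℕ+ ⊕ ℕ+

/-- The noncommutative polynomial algebra 𝔡 over ℤ freely generated by `S`. -/
abbrev Dfree : Type := MonoidAlgebra ℤ (FreeMonoid Letter)

/-- The subalgebra 𝔡_ξ generated by the `ξ_k`, realized as a free algebra on `{ξ_k}_{k≥1}`. -/
abbrev DXi : Type := MonoidAlgebra ℤ (FreeMonoid ℕ+)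

/-- The subalgebra 𝔡₁ generated by `z_1` and `ξ_1`, realized as a free algebra on two letters
(`false = z_1`, `true = ξ_1`). -/
abbrev DOne : Type := MonoidAlgebra ℤ (FreeMonoid Bool)

/-- The generator `z_k` of 𝔡. -/
def zL (k : ℕ+) : Dfree := MonoidAlgebra.single (FreeMonoid.of (Sum.inl k)) 1

/-- The generator `ξ_k` of 𝔡. -/
def xiL (k : ℕ+) : Dfree := MonoidAlgebra.single (FreeMonoid.of (Sum.inr k)) 1

/-- The generator `ξ_k` of 𝔡_ξ. -/
def xiX (k : ℕ+) : DXi := MonoidAlgebra.single (FreeMonoid.of k) 1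

/-- The generator `z_1` of 𝔡₁. -/
def zO : DOne := MonoidAlgebra.single (FreeMonoid.of false) 1

/-- The generator `ξ_1` of 𝔡₁. -/
def xiO : DOne := MonoidAlgebra.single (FreeMonoid.of true) 1

/-- `z_k` for a natural number index `k ≥ 1` (junk value `0` for `k = 0`). -/
def zOf (k : ℕ) : Dfree := if h : 0 < k then zL ⟨k, h⟩ else 0

/-- `ξ_k ∈ 𝔡_ξ` for a natural number index `k ≥ 1` (junk value `0` for `k = 0`). -/
def xiOf (k : ℕ) : DXi := if h : 0 < k then xiX ⟨k, h⟩ else 0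

/-- The canonical embedding `𝔡_ξ ↪ 𝔡`. -/
def toD (v : DXi) : Dfree := MonoidAlgebra.ofCoeff (Finsupp.mapDomain (FreeMonoid.map Sum.inr) v.coeff)

/-- The canonical embedding `𝔡₁ ↪ 𝔡` (`false ↦ z_1`, `true ↦ ξ_1`). -/
def toD1 (w : DOne) : Dfree :=
  MonoidAlgebra.ofCoeff
    (Finsupp.mapDomain (FreeMonoid.map fun b => if b then Sum.inr 1 else Sum.inl 1) w.coeff)

/-- `J_{z_k}(m) = q^{(k-1)m}/[m]^k` and `J_{ξ_k}(m) = q^{km}/[m]^k`. -/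
def Jlet (q : ℝ) : Letter → ℕ → ℝ
  | Sum.inl k, m => q ^ (((k : ℕ) - 1) * m) / qint q m ^ (k : ℕ)
  | Sum.inr k, m => q ^ ((k : ℕ) * m) / qint q m ^ (k : ℕ)

/-- `A_w(M) = Σ_{M > m_1 > ... > m_r > 0} J_{u_1}(m_1) ⋯ J_{u_r}(m_r)` for a word `w = u_1 ⋯ u_r`. -/
def AW (q : ℝ) (w : List Letter) (M : ℕ) : ℝ :=
  ∑ m ∈ (Fintype.piFinset fun _ : Fin w.length => Finset.Ioo 0 M).filter
      (fun m => ∀ i j, i < j → m j < m i),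
    ∏ j, Jlet q (w.get j) (m j)

/-- `A*_w(M) = Σ_{M > m_1 ≥ ... ≥ m_r ≥ 1} J_{u_1}(m_1) ⋯ J_{u_r}(m_r)` for a word `w = u_1 ⋯ u_r`. -/
def AstarW (q : ℝ) (w : List Letter) (M : ℕ) : ℝ :=
  ∑ m ∈ (Fintype.piFinset fun _ : Fin w.length => Finset.Ioo 0 M).filter
      (fun m => ∀ i j, i ≤ j → m j ≤ m i),
    ∏ j, Jlet q (w.get j) (m j)

/-- The ℤ-linear extension `A(M) : 𝔡 → ℝ`. -/
def Amap (q : ℝ) (x : Dfree) (M : ℕ) : ℝ :=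
  Finsupp.sum x.coeff fun w a => (a : ℝ) * AW q (FreeMonoid.toList w) M

/-- The ℤ-linear extension `A*(M) : 𝔡 → ℝ`. -/
def Astarmap (q : ℝ) (x : Dfree) (M : ℕ) : ℝ :=
  Finsupp.sum x.coeff fun w a => (a : ℝ) * AstarW q (FreeMonoid.toList w) M

/-- The map `ρ` on words:  `ρ(1,w) = w`, `ρ(v,1) = v`,
`ρ(ξ_k v, z_ℓ w) = ξ_k ρ(v, z_ℓ w) + z_ℓ ρ(ξ_k v, w) + z_{k+ℓ} ρ(v,w)`, and
`ρ(ξ_k v, ξ_ℓ w) = ξ_k ρ(v, ξ_ℓ w) + ξ_ℓ ρ(ξ_k v, w) + ξ_{k+ℓ} ρ(v,w)`. -/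
def rhoW : List ℕ+ → List Letter → Dfree
  | [], w => MonoidAlgebra.single (FreeMonoid.ofList w) 1
  | k :: v, [] => MonoidAlgebra.single (FreeMonoid.ofList ((k :: v).map Sum.inr)) 1
  | k :: v, Sum.inl l :: w =>
      xiL k * rhoW v (Sum.inl l :: w) + zL l * rhoW (k :: v) w + zL (k + l) * rhoW v w
  | k :: v, Sum.inr l :: w =>
      xiL k * rhoW v (Sum.inr l :: w) + xiL l * rhoW (k :: v) w + xiL (k + l) * rhoW v w
  termination_by v w => v.length + w.length

/-- The ℤ-bilinear map `ρ : 𝔡_ξ × 𝔡 → 𝔡`. -/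
def rho (v : DXi) (x : Dfree) : Dfree :=
  Finsupp.sum v.coeff fun vw a =>
    Finsupp.sum x.coeff fun xw b => (a * b) • rhoW (FreeMonoid.toList vw) (FreeMonoid.toList xw)

/-- `ξ_k ∘ ·` on words: `ξ_k ∘ 1 = 0` and `ξ_k ∘ (ξ_ℓ v) = ξ_{k+ℓ} v`. -/
def circW (k : ℕ+) : List ℕ+ → DXi
  | [] => 0
  | l :: v => MonoidAlgebra.single (FreeMonoid.ofList ((k + l) :: v)) 1

/-- The ℤ-linear map `ξ_k ∘ · : 𝔡_ξ → 𝔡_ξ`. -/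
def circ (k : ℕ+) (x : DXi) : DXi :=
  Finsupp.sum x.coeff fun w a => a • circW k (FreeMonoid.toList w)

/-- The map `d` on words: `d(1) = 1` and `d(ξ_k v) = ξ_k d(v) + ξ_k ∘ d(v)`. -/
def dW : List ℕ+ → DXi
  | [] => 1
  | k :: v => xiX k * dW v + circ k (dW v)

/-- The ℤ-linear map `d : 𝔡_ξ → 𝔡_ξ`. -/
def dmap (v : DXi) : DXi := Finsupp.sum v.coeff fun w a => a • dW (FreeMonoid.toList w)

/-- The maps `φ_s` on words of 𝔡₁: `φ_0 = id`, `φ_s(1) = ξ_1 z_1^{s-1}` for `s ≥ 1`,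
`φ_s(z_1 w) = z_1 φ_s(w) + ξ_1 Σ_{i=1}^{s} z_1^i φ_{s-i}(w)`, and
`φ_s(ξ_1 w) = ξ_1 Σ_{i=0}^{s} z_1^i φ_{s-i}(w)`. -/
def phiW : ℕ → List Bool → DOne
  | s, [] =>
      if s = 0 then 1
      else MonoidAlgebra.single (FreeMonoid.ofList (true :: List.replicate (s - 1) false)) 1
  | s, false :: w =>
      zO * phiW s w +
        ∑ i ∈ Finset.Icc 1 s, xiO * zO ^ i * phiW (s - i) w
  | s, true :: w =>
      ∑ i ∈ Finset.range (s + 1), xiO * zO ^ i * phiW (s - i) w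
  termination_by _ w => w.length

/-- The ℤ-linear maps `φ_s : 𝔡₁ → 𝔡₁`. -/
def phi (s : ℕ) (x : DOne) : DOne := Finsupp.sum x.coeff fun w a => a • phiW s (FreeMonoid.toList w)

/-- `Φ_0 = id` and `Φ_ℓ = Σ_{r=1}^{ℓ} (-1)^r Σ_{c ∈ I(r,ℓ)} φ_{c_1} ⋯ φ_{c_r}` for `ℓ ≥ 1`. -/
def PhiM : ℕ → DOne → DOne
  | 0 => id
  | l + 1 => fun x =>
      ∑ r ∈ Finset.Icc 1 (l + 1),
        (-1 : ℤ) ^ r •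
          ∑ c ∈ Ifin r (l + 1), ((List.ofFn fun j : Fin r => phi (c j)).foldr (· ∘ ·) id) x

/-- `Z_s(w) = Σ_{ℓ=0}^{s} ρ(d(ξ_1^{s-ℓ}), Φ_ℓ(w))`. -/
def Zmap (s : ℕ) (w : DOne) : Dfree :=
  ∑ l ∈ Finset.range (s + 1), rho (dmap (xiX 1 ^ (s - l))) (toD1 (PhiM l w))

open PowerSeries Finset

/-!
All identities are statements about generating series in `t` whose coefficients are ℤ-linear
endomorphisms. For `φ(t) = Σ_s φ_s t^s`, the formula defining `Φ_ℓ` says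
`Φ(t) = Σ_r (1 - φ(t))^r`; as `1 - φ(t)` has no constant term, `Φ(t)` is a two-sided inverse of
`φ(t)`. The recursion of `φ_s` on `z_1 w` and `ξ_1 w` reads
`φ(t) z_1 = (z_1 + t B(t) z_1) φ(t)` and `φ(t) ξ_1 = B(t) φ(t)` with `B(t) = Σ_i ξ_1 z_1^i t^i`,
so conjugating by `Φ(t)` gives `z_1 Φ(t) = (1 + t ξ_1) Φ(t) z_1`.

On the side of `𝔡`, let `R(t) = Σ_a ρ(d(ξ_1^a), ·) t^a`. Since
`d(ξ_1^{a+1}) = Σ_k ξ_{k+1} d(ξ_1^{a-k})`, the recursion of `ρ` gives, for `u ∈ {z, ξ}`,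
`R(t) u_1 = t Ξ(t) R(t) u_1 + U(t) R(t)`, where `Ξ(t) = Σ_k ξ_{k+1} t^k` and
`U(t) = Σ_k u_{k+1} t^k` act by left multiplication. As `Σ_s Z_s(w) t^s = R(t) Φ(t) w`, these
relations and the centrality of `t` give `Σ_s Z_s(z_1 w) t^s = (Σ_ℓ z_{ℓ+1} t^ℓ) Σ_s Z_s(w) t^s`.
-/

section GeometricSeries

variable {R : Type*} [Ring R]

theorem PowerSeries.eq_of_forall_X_pow_dvd_sub {f g : R⟦X⟧} (h : ∀ N, X ^ N ∣ f - g) :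
    f = g := by
  ext n
  have := X_pow_dvd_iff.mp (h (n + 1)) n n.lt_succ_self
  rwa [map_sub, sub_eq_zero] at this

theorem PowerSeries.X_pow_dvd_pow_of_constantCoeff_eq_zero {x : R⟦X⟧}
    (hx : constantCoeff x = 0) (N : ℕ) : X ^ N ∣ x ^ N := by
  obtain ⟨y, rfl⟩ := X_dvd_iff.mpr hx
  exact ⟨y ^ N, (commute_X y).symm.mul_pow N⟩

theorem PowerSeries.X_pow_dvd_sub_sum_pow {x Φ : R⟦X⟧} (hx : constantCoeff x = 0)
    (hΦ : ∀ n, coeff n Φ = ∑ r ∈ range (n + 1), coeff n (x ^ r)) (N : ℕ) :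
    X ^ N ∣ Φ - ∑ r ∈ range N, x ^ r := by
  refine X_pow_dvd_iff.mpr fun m hm => ?_
  rw [map_sub, map_sum, hΦ, sub_eq_zero]
  refine sum_subset (range_subset_range.mpr hm) fun r _ hr => ?_
  exact X_pow_dvd_iff.mp (X_pow_dvd_pow_of_constantCoeff_eq_zero hx r) m
    (by simpa using hr)

theorem PowerSeries.mul_one_sub_eq_one_of_coeff_eq_sum_pow {x Φ : R⟦X⟧}
    (hx : constantCoeff x = 0)
    (hΦ : ∀ n, coeff n Φ = ∑ r ∈ range (n + 1), coeff n (x ^ r)) : Φ * (1 - x) = 1 := by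
  refine eq_of_forall_X_pow_dvd_sub fun N => ?_
  have : Φ * (1 - x) - 1 = (Φ - ∑ r ∈ range N, x ^ r) * (1 - x) - x ^ N := by
    rw [sub_mul, geom_sum_mul_neg]; abel
  rw [this]
  exact dvd_sub (dvd_mul_of_dvd_left (X_pow_dvd_sub_sum_pow hx hΦ N) _)
    (X_pow_dvd_pow_of_constantCoeff_eq_zero hx N)

theorem PowerSeries.one_sub_mul_eq_one_of_coeff_eq_sum_pow {x Φ : R⟦X⟧}
    (hx : constantCoeff x = 0)
    (hΦ : ∀ n, coeff n Φ = ∑ r ∈ range (n + 1), coeff n (x ^ r)) : (1 - x) * Φ = 1 := by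
  refine eq_of_forall_X_pow_dvd_sub fun N => ?_
  have : (1 - x) * Φ - 1 = (1 - x) * (Φ - ∑ r ∈ range N, x ^ r) - x ^ N := by
    rw [mul_sub, mul_neg_geom_sum]; abel
  rw [this]
  obtain ⟨y, hy⟩ := X_pow_dvd_sub_sum_pow hx hΦ N
  refine dvd_sub ⟨(1 - x) * y, ?_⟩ (X_pow_dvd_pow_of_constantCoeff_eq_zero hx N)
  rw [hy, ← mul_assoc, ← mul_assoc, (commute_X_pow (1 - x) N).eq]

end GeometricSeries

theorem eq_of_eq_add_mul_of_eq_mul_add {R : Type*} [Ring R] {x e p p' q r : R}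
    (hxe : Commute x e) (hp : p = p' + x * q) (hp_rec : p = x * e * p + r)
    (hq_rec : q = x * e * q + e * p') : p' = r := by
  have hxq : x * q = x * e * (x * q) + x * e * p' := by
    have h : x * e * (x * q) = x * (x * e * q) := by
      rw [mul_assoc, ← mul_assoc e, ← hxe.eq]
    rw [h, mul_assoc x e p', ← mul_add, ← hq_rec]
  calc p' = p - x * q := by rw [hp]; abel
    _ = x * e * p + r - (x * e * (x * q) + x * e * p') := by rw [← hxq, ← hp_rec]
    _ = x * e * (p - x * q - p') + r := by rw [mul_sub, mul_sub]; abel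
    _ = r := by rw [hp]; simp

theorem Finset.sum_Icc_one_eq_sum_range {M : Type*} [AddCommMonoid M] (f : ℕ → M) (n : ℕ) :
    ∑ i ∈ Icc 1 n, f i = ∑ i ∈ range n, f (i + 1) := by
  rw [← Ico_add_one_right_eq_Icc, sum_Ico_eq_sum_range, Nat.add_sub_cancel]
  simp only [add_comm]

theorem Module.End.coe_list_prod {R M : Type*} [Semiring R] [AddCommMonoid M] [Module R M]
    (l : List (Module.End R M)) : ⇑l.prod = (l.map (⇑)).foldr (· ∘ ·) id := by
  induction l with
  | nil => rfl
  | cons f l ih => rw [List.prod_cons, List.map_cons, List.foldr_cons, ← ih]; rfl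

theorem FreeMonoid.toList_of_pow {α : Type*} (x : α) (n : ℕ) :
    (FreeMonoid.of x ^ n).toList = List.replicate n x := by
  induction n with
  | zero => rfl
  | succ n ih => rw [pow_succ', FreeMonoid.toList_of_mul, ih, List.replicate_succ]

theorem mem_Ifin {r n : ℕ} {c : Fin r → ℕ} :
    c ∈ Ifin r n ↔ (∀ i, 0 < c i) ∧ ∑ i, c i = n := by
  simp only [Ifin, mem_filter, Fintype.mem_piFinset, mem_Icc]
  constructor
  · rintro ⟨h, rfl⟩
    exact ⟨fun i => (h i).1, rfl⟩
  · rintro ⟨h, rfl⟩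
    exact ⟨fun i => ⟨h i, single_le_sum (fun j _ => Nat.zero_le _) (mem_univ i)⟩, rfl⟩

theorem sum_Ifin_succ {M : Type*} [AddCommMonoid M] (r n : ℕ) (G : (Fin (r + 1) → ℕ) → M) :
    ∑ c ∈ Ifin (r + 1) n, G c =
      ∑ p ∈ antidiagonal n with 0 < p.1, ∑ c ∈ Ifin r p.2, G (Fin.cons p.1 c) := by
  rw [sum_sigma']
  refine sum_nbij' (fun c => ⟨(c 0, n - c 0), Fin.tail c⟩) (fun x => Fin.cons x.1.1 x.2)
    ?_ ?_ ?_ ?_ ?_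
  · intro c hc
    obtain ⟨hpos, hsum⟩ := mem_Ifin.mp hc
    rw [Fin.sum_univ_succ] at hsum
    simp only [mem_sigma, mem_filter, HasAntidiagonal.mem_antidiagonal, mem_Ifin]
    exact ⟨⟨by omega, hpos 0⟩, fun i => hpos i.succ, by simp only [Fin.tail]; omega⟩
  · rintro ⟨⟨a, b⟩, c⟩ hx
    simp only [mem_sigma, mem_filter, HasAntidiagonal.mem_antidiagonal, mem_Ifin] at hx ⊢
    obtain ⟨⟨hab, ha⟩, hpos, hsum⟩ := hx
    refine ⟨Fin.cases ha hpos, ?_⟩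
    rw [Fin.sum_cons]
    omega
  · intro c _
    exact Fin.cons_self_tail c
  · rintro ⟨⟨a, b⟩, c⟩ hx
    simp only [mem_sigma, mem_filter, HasAntidiagonal.mem_antidiagonal] at hx
    simp only [Fin.cons_zero, Fin.tail_cons, Sigma.mk.injEq, Prod.mk.injEq, heq_eq_eq, and_true,
      true_and]
    omega
  · intro c _
    rw [Fin.cons_self_tail]

theorem PowerSeries.coeff_pow_eq_sum_Ifin {R : Type*} [Semiring R] {ψ : R⟦X⟧}
    (hψ : constantCoeff ψ = 0) (r n : ℕ) :
    coeff n (ψ ^ r) = ∑ c ∈ Ifin r n, (List.ofFn fun j => coeff (c j) ψ).prod := by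
  induction r generalizing n with
  | zero => rcases n with _ | n <;> simp [Ifin, coeff_one]
  | succ r ih =>
    rw [pow_succ', coeff_mul, sum_Ifin_succ,
      ← sum_filter_of_ne (p := fun p : ℕ × ℕ => 0 < p.1)]
    · refine sum_congr rfl fun p _ => ?_
      simp only [ih, mul_sum, List.ofFn_succ, Fin.cons_zero, Fin.cons_succ, List.prod_cons]
    · rintro ⟨_ | a, b⟩ _ hp
      · simp [hψ] at hp
      · exact a.succ_pos

theorem phi_add (s : ℕ) (x y : DOne) : phi s (x + y) = phi s x + phi s y :=
  Finsupp.sum_add_index' (fun _ => zero_smul ..) (fun _ _ _ => add_smul ..)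

def phiEnd (s : ℕ) : Module.End ℤ DOne := (AddMonoidHom.mk' (phi s) (phi_add s)).toIntLinearMap

theorem phiEnd_apply (s : ℕ) (x : DOne) : phiEnd s x = phi s x := rfl

theorem phi_single (s : ℕ) (w : FreeMonoid Bool) (a : ℤ) :
    phi s (MonoidAlgebra.single w a) = a • phiW s w.toList :=
  Finsupp.sum_single_index (zero_smul ..)

theorem phiW_zero (l : List Bool) : phiW 0 l = MonoidAlgebra.single (FreeMonoid.ofList l) 1 := by
  induction l with
  | nil => rw [phiW]; rfl
  | cons b l ih => cases b <;> simp [phiW, ih, zO, xiO, MonoidAlgebra.single_mul_single]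

theorem phiEnd_zero : phiEnd 0 = 1 := by
  ext w
  simp [phiEnd_apply, phi_single, phiW_zero]

theorem zO_mul_single (w : FreeMonoid Bool) (a : ℤ) :
    zO * MonoidAlgebra.single w a = MonoidAlgebra.single (FreeMonoid.of false * w) a := by
  rw [zO, MonoidAlgebra.single_mul_single, one_mul]

theorem xiO_mul_single (w : FreeMonoid Bool) (a : ℤ) :
    xiO * MonoidAlgebra.single w a = MonoidAlgebra.single (FreeMonoid.of true * w) a := by
  rw [xiO, MonoidAlgebra.single_mul_single, one_mul]

theorem phiEnd_mul_lmul_zO (s : ℕ) :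
    phiEnd s * Algebra.lmul ℤ DOne zO = Algebra.lmul ℤ DOne zO * phiEnd s +
      ∑ i ∈ Icc 1 s, Algebra.lmul ℤ DOne (xiO * zO ^ i) * phiEnd (s - i) := by
  ext w
  simp [phiEnd_apply, zO_mul_single, phi_single, phiW]

theorem phiEnd_mul_lmul_xiO (s : ℕ) :
    phiEnd s * Algebra.lmul ℤ DOne xiO =
      ∑ i ∈ range (s + 1), Algebra.lmul ℤ DOne (xiO * zO ^ i) * phiEnd (s - i) := by
  ext w
  simp [phiEnd_apply, xiO_mul_single, phi_single, phiW]

def phiSeries : (Module.End ℤ DOne)⟦X⟧ := mk phiEnd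

def phiInvSeries : (Module.End ℤ DOne)⟦X⟧ :=
  mk fun n => ∑ r ∈ range (n + 1), (-1 : ℤ) ^ r •
    ∑ c ∈ Ifin r n, (List.ofFn fun j => phiEnd (c j)).prod

theorem PhiM_eq_coeff_phiInvSeries (n : ℕ) (x : DOne) : PhiM n x = coeff n phiInvSeries x := by
  rcases n with _ | l
  · simp [PhiM, phiInvSeries, Ifin]
  · rw [phiInvSeries, coeff_mk, sum_range_succ', PhiM]
    dsimp only
    have hempty : Ifin 0 (l + 1) = ∅ := by
      ext c
      simp [mem_Ifin]
    rw [sum_Icc_one_eq_sum_range, hempty, sum_empty, smul_zero, add_zero, LinearMap.coe_sum,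
      Finset.sum_apply]
    refine sum_congr rfl fun r _ => ?_
    rw [LinearMap.smul_apply, LinearMap.coe_sum, Finset.sum_apply]
    simp only [Module.End.coe_list_prod, List.map_ofFn]
    rfl

theorem constantCoeff_one_sub_phiSeries : constantCoeff (1 - phiSeries) = 0 := by
  rw [map_sub, map_one, ← coeff_zero_eq_constantCoeff_apply, phiSeries, coeff_mk, phiEnd_zero,
    sub_self]

theorem coeff_phiInvSeries (n : ℕ) :
    coeff n phiInvSeries = ∑ r ∈ range (n + 1), coeff n ((1 - phiSeries) ^ r) := by
  rw [phiInvSeries, coeff_mk]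
  refine sum_congr rfl fun r _ => ?_
  rw [coeff_pow_eq_sum_Ifin constantCoeff_one_sub_phiSeries, smul_sum]
  refine sum_congr rfl fun c hc => ?_
  have hcoeff : ∀ j, coeff (c j) (1 - phiSeries) = -phiEnd (c j) := fun j => by
    rw [map_sub, coeff_one, if_neg ((mem_Ifin.mp hc).1 j).ne', zero_sub, phiSeries, coeff_mk]
  simp only [hcoeff]
  have hneg :
      (List.ofFn fun j => -phiEnd (c j)) = (List.ofFn fun j => phiEnd (c j)).map Neg.neg := by
    rw [List.map_ofFn]
    rfl
  rw [hneg, List.prod_map_neg, List.length_ofFn, zsmul_eq_mul]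
  push_cast
  rfl

theorem phiSeries_mul_phiInvSeries : phiSeries * phiInvSeries = 1 := by
  simpa using
    one_sub_mul_eq_one_of_coeff_eq_sum_pow constantCoeff_one_sub_phiSeries coeff_phiInvSeries

theorem phiInvSeries_mul_phiSeries : phiInvSeries * phiSeries = 1 := by
  simpa using
    mul_one_sub_eq_one_of_coeff_eq_sum_pow constantCoeff_one_sub_phiSeries coeff_phiInvSeries

def phiSeriesUnit : (Module.End ℤ DOne)⟦X⟧ˣ :=
  ⟨phiSeries, phiInvSeries, phiSeries_mul_phiInvSeries, phiInvSeries_mul_phiSeries⟩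

theorem phiInvSeries_mul_eq_of_phiSeries_mul {a b : (Module.End ℤ DOne)⟦X⟧}
    (h : phiSeries * a = b * phiSeries) : phiInvSeries * b = a * phiInvSeries :=
  SemiconjBy.units_inv_symm_left (a := phiSeriesUnit) h

def xiGeomSeries : (Module.End ℤ DOne)⟦X⟧ := mk fun i => Algebra.lmul ℤ DOne (xiO * zO ^ i)

theorem coeff_mul_phiSeries (F : (Module.End ℤ DOne)⟦X⟧) (s : ℕ) :
    coeff s (F * phiSeries) = ∑ i ∈ range (s + 1), coeff i F * phiEnd (s - i) := by
  rw [coeff_mul,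
    Finset.Nat.sum_antidiagonal_eq_sum_range_succ (fun i j => coeff i F * coeff j phiSeries)]
  simp only [phiSeries, coeff_mk]

theorem phiSeries_mul_C_lmul_xiO :
    phiSeries * C (Algebra.lmul ℤ DOne xiO) = xiGeomSeries * phiSeries := by
  ext s : 1
  rw [coeff_mul_C, coeff_mul_phiSeries, phiSeries, coeff_mk, phiEnd_mul_lmul_xiO]
  simp only [xiGeomSeries, coeff_mk]

theorem phiSeries_mul_C_lmul_zO :
    phiSeries * C (Algebra.lmul ℤ DOne zO) =
      (C (Algebra.lmul ℤ DOne zO) + X * xiGeomSeries * C (Algebra.lmul ℤ DOne zO)) *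
        phiSeries := by
  ext s : 1
  rw [coeff_mul_C, add_mul, map_add, coeff_C_mul, phiSeries, coeff_mk, phiEnd_mul_lmul_zO,
    mul_assoc X, mul_assoc X]
  rcases s with _ | t
  · simp
  · rw [coeff_succ_X_mul, ← phiSeries, coeff_mul_phiSeries, sum_Icc_one_eq_sum_range]
    refine congrArg _ (sum_congr rfl fun i _ => ?_)
    rw [coeff_mul_C, xiGeomSeries, coeff_mk, Nat.add_sub_add_right, pow_succ, ← mul_assoc,
      map_mul _ _ zO]

theorem C_lmul_zO_mul_phiInvSeries :
    C (Algebra.lmul ℤ DOne zO) * phiInvSeries =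
      (1 + X * C (Algebra.lmul ℤ DOne xiO)) * phiInvSeries * C (Algebra.lmul ℤ DOne zO) := by
  have hz := phiInvSeries_mul_eq_of_phiSeries_mul phiSeries_mul_C_lmul_zO
  have hxi := phiInvSeries_mul_eq_of_phiSeries_mul phiSeries_mul_C_lmul_xiO
  rw [← hz, mul_add, add_mul, add_mul, one_mul, ← mul_assoc, ← mul_assoc,
    (commute_X phiInvSeries).eq, mul_assoc X phiInvSeries, hxi, ← mul_assoc]

theorem zO_mul_PhiM_succ (n : ℕ) (w : DOne) :
    zO * PhiM (n + 1) w = PhiM (n + 1) (zO * w) + xiO * PhiM n (zO * w) := by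
  have h := congrArg (fun F : (Module.End ℤ DOne)⟦X⟧ => coeff (n + 1) F w)
    C_lmul_zO_mul_phiInvSeries
  simp only [coeff_C_mul, add_mul, one_mul, map_add, mul_assoc X, coeff_succ_X_mul,
    coeff_mul_C, mul_assoc] at h
  simpa [PhiM_eq_coeff_phiInvSeries] using h

theorem rho_add_left (v v' : DXi) (x : Dfree) : rho (v + v') x = rho v x + rho v' x := by
  refine Finsupp.sum_add_index' (fun _ => by simp) fun _ a b => ?_
  simp only [add_mul, add_smul]
  exact Finsupp.sum_add

theorem rho_add_right (v : DXi) (x x' : Dfree) : rho v (x + x') = rho v x + rho v x' := by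
  rw [rho, rho, rho, ← Finsupp.sum_add]
  refine Finsupp.sum_congr fun _ _ => ?_
  exact Finsupp.sum_add_index' (fun _ => by simp) fun _ _ _ => by rw [mul_add, add_smul]

def rhoLeft (y : Dfree) : DXi →+ Dfree := AddMonoidHom.mk' (rho · y) (rho_add_left · · y)

def rhoEnd (v : DXi) : Module.End ℤ Dfree :=
  (AddMonoidHom.mk' (rho v) (rho_add_right v)).toIntLinearMap

theorem rhoEnd_apply (v : DXi) (y : Dfree) : rhoEnd v y = rho v y := rfl

theorem rho_single_single (vw : FreeMonoid ℕ+) (xw : FreeMonoid Letter) (a b : ℤ) :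
    rho (MonoidAlgebra.single vw a) (MonoidAlgebra.single xw b) =
      (a * b) • rhoW vw.toList xw.toList := by
  rw [rho, MonoidAlgebra.coeff_single, MonoidAlgebra.coeff_single,
    Finsupp.sum_single_index (by simp), Finsupp.sum_single_index (by simp)]

theorem rho_one_left (y : Dfree) : rho 1 y = y := by
  induction y using MonoidAlgebra.induction_linear with
  | zero => simp [rho]
  | add f g hf hg => rw [rho_add_right, hf, hg]
  | single w b =>
    rw [MonoidAlgebra.one_def, rho_single_single, one_mul, FreeMonoid.toList_one, rhoW,
      FreeMonoid.ofList_toList, MonoidAlgebra.smul_single, smul_eq_mul, mul_one]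

def letter (e : Letter) : Dfree := MonoidAlgebra.single (FreeMonoid.of e) 1

def shiftLetter (n : ℕ) : Letter → Letter :=
  Sum.map (fun l => ⟨n + l, by positivity⟩) (fun l => ⟨n + l, by positivity⟩)

theorem shiftLetter_zero (e : Letter) : shiftLetter 0 e = e := by
  rcases e with l | l <;> exact congrArg _ (PNat.eq (Nat.zero_add _))

theorem letter_mul_single (e : Letter) (w : FreeMonoid Letter) (b : ℤ) :
    letter e * MonoidAlgebra.single w b = MonoidAlgebra.single (FreeMonoid.of e * w) b := by
  rw [letter, MonoidAlgebra.single_mul_single, one_mul]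

theorem xiX_mul_single (k : ℕ+) (w : FreeMonoid ℕ+) (b : ℤ) :
    xiX k * MonoidAlgebra.single w b = MonoidAlgebra.single (FreeMonoid.of k * w) b := by
  rw [xiX, MonoidAlgebra.single_mul_single, one_mul]

theorem rho_xiX_mul_letter_mul (k : ℕ+) (e : Letter) (v : DXi) (y : Dfree) :
    rho (xiX k * v) (letter e * y) =
      xiL k * rho v (letter e * y) + letter e * rho (xiX k * v) y +
        letter (shiftLetter k e) * rho v y := by
  induction v using MonoidAlgebra.induction_linear with
  | zero => simp [rho]
  | add f g hf hg =>
    simp only [mul_add, rho_add_left, hf, hg]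
    abel
  | single vw a =>
    induction y using MonoidAlgebra.induction_linear with
    | zero => simp [rho]
    | add f g hf hg =>
      simp only [mul_add, rho_add_right, hf, hg]
      abel
    | single xw b =>
      simp only [xiX_mul_single, letter_mul_single, rho_single_single, FreeMonoid.toList_of_mul]
      rcases e with l | l <;>
        simp only [rhoW, smul_add, mul_smul_comm] <;> rfl

theorem circ_add (k : ℕ+) (v v' : DXi) : circ k (v + v') = circ k v + circ k v' :=
  Finsupp.sum_add_index' (fun _ => zero_smul ..) (fun _ _ _ => add_smul ..)

def circHom (k : ℕ+) : DXi →+ DXi := AddMonoidHom.mk' (circ k) (circ_add k)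

theorem circ_one (k : ℕ+) : circ k 1 = 0 := by
  rw [circ, MonoidAlgebra.one_def, MonoidAlgebra.coeff_single, Finsupp.sum_single_index (by simp),
    FreeMonoid.toList_one, circW, smul_zero]

theorem circ_xiX_mul (k l : ℕ+) (v : DXi) : circ k (xiX l * v) = xiX (k + l) * v := by
  induction v using MonoidAlgebra.induction_linear with
  | zero => simp [circ]
  | add f g hf hg => rw [mul_add, circ_add, hf, hg, mul_add]
  | single w a =>
    rw [xiX_mul_single, xiX_mul_single, circ, MonoidAlgebra.coeff_single,
      Finsupp.sum_single_index (by simp), FreeMonoid.toList_of_mul, circW,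
      MonoidAlgebra.smul_single, smul_eq_mul, mul_one]
    rfl

def dPow (a : ℕ) : DXi := dmap (xiX 1 ^ a)

theorem dPow_eq_dW (a : ℕ) : dPow a = dW (List.replicate a 1) := by
  rw [dPow, xiX, MonoidAlgebra.single_pow, one_pow, dmap, MonoidAlgebra.coeff_single,
    Finsupp.sum_single_index (by simp), one_smul, FreeMonoid.toList_of_pow]

theorem dPow_zero : dPow 0 = 1 := by
  rw [dPow_eq_dW, List.replicate_zero, dW]

theorem dPow_succ (a : ℕ) : dPow (a + 1) = xiX 1 * dPow a + circ 1 (dPow a) := by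
  rw [dPow_eq_dW, dPow_eq_dW, List.replicate_succ, dW]

theorem dPow_succ_eq_sum (a : ℕ) :
    dPow (a + 1) = ∑ p ∈ antidiagonal a, xiX p.1.succPNat * dPow p.2 := by
  induction a with
  | zero =>
    rw [dPow_succ, dPow_zero, circ_one, add_zero, Finset.Nat.antidiagonal_zero, sum_singleton,
      dPow_zero]
    rfl
  | succ a ih =>
    have hcirc : circ 1 (dPow (a + 1)) =
        ∑ p ∈ antidiagonal a, xiX (p.1 + 1).succPNat * dPow p.2 := by
      rw [ih]
      refine (map_sum (circHom 1) _ _).trans (sum_congr rfl fun p _ => ?_)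
      exact (circ_xiX_mul 1 _ _).trans (congrArg (xiX · * _) (PNat.eq (by simp [add_comm])))
    rw [dPow_succ, hcirc, Finset.Nat.sum_antidiagonal_succ]
    rfl

theorem rho_dPow_succ_letter_mul (n : ℕ) (e : Letter) (y : Dfree) :
    rho (dPow (n + 1)) (letter e * y) =
      ∑ p ∈ antidiagonal n, xiL p.1.succPNat * rho (dPow p.2) (letter e * y) +
        ∑ p ∈ antidiagonal (n + 1), letter (shiftLetter p.1 e) * rho (dPow p.2) y := by
  have hsum (x : Dfree) :
      rho (dPow (n + 1)) x = ∑ p ∈ antidiagonal n, rho (xiX p.1.succPNat * dPow p.2) x := by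
    rw [dPow_succ_eq_sum]
    exact map_sum (rhoLeft x) _ _
  rw [hsum, Finset.Nat.sum_antidiagonal_succ, shiftLetter_zero]
  simp only [rho_xiX_mul_letter_mul, sum_add_distrib, ← mul_sum, ← hsum]
  rw [add_assoc]
  rfl

def rhoSeries : (Module.End ℤ Dfree)⟦X⟧ := mk fun a => rhoEnd (dPow a)

def letterSeries (e : Letter) : (Module.End ℤ Dfree)⟦X⟧ :=
  mk fun n => Algebra.lmul ℤ Dfree (letter (shiftLetter n e))

theorem rhoSeries_mul_C_letter (e : Letter) :
    rhoSeries * C (Algebra.lmul ℤ Dfree (letter e)) =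
      X * letterSeries (Sum.inr 1) * (rhoSeries * C (Algebra.lmul ℤ Dfree (letter e))) +
        letterSeries e * rhoSeries := by
  ext a : 1
  rw [map_add, coeff_mul_C, mul_assoc X]
  rcases a with _ | n
  · refine LinearMap.ext fun y => ?_
    simp [rhoSeries, letterSeries, dPow_zero, rhoEnd_apply, rho_one_left, shiftLetter_zero]
  · rw [coeff_succ_X_mul, coeff_mul, coeff_mul]
    refine LinearMap.ext fun y => ?_
    simp only [rhoSeries, letterSeries, coeff_mk, coeff_mul_C, LinearMap.add_apply,
      LinearMap.coe_sum, Finset.sum_apply, Module.End.mul_apply, Algebra.coe_lmul_eq_mul,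
      LinearMap.mul_apply_apply, rhoEnd_apply]
    exact rho_dPow_succ_letter_mul n e y

theorem toD1_mul (x y : DOne) : toD1 (x * y) = toD1 x * toD1 y :=
  map_mul (MonoidAlgebra.mapDomainRingHom ℤ _) x y

theorem toD1_add (x y : DOne) : toD1 (x + y) = toD1 x + toD1 y :=
  map_add (MonoidAlgebra.mapDomainRingHom ℤ _) x y

theorem toD1_zO : toD1 zO = letter (Sum.inl 1) := by
  rw [toD1, zO, MonoidAlgebra.coeff_single, Finsupp.mapDomain_single]
  rfl

theorem toD1_xiO : toD1 xiO = letter (Sum.inr 1) := by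
  rw [toD1, xiO, MonoidAlgebra.coeff_single, Finsupp.mapDomain_single]
  rfl

-- Elements `y ∈ 𝔡` enter through their left multiplications, so that `ρ(d, y)` is
-- recovered as `(ρ(d, ·) ∘ (y * ·)) 1`: see `Zmap_eq_coeff_rhoSeries_mul`.
def lmulPhiMSeries (w : DOne) : (Module.End ℤ Dfree)⟦X⟧ :=
  mk fun j => Algebra.lmul ℤ Dfree (toD1 (PhiM j w))

theorem C_lmul_letter_mul_lmulPhiMSeries (w : DOne) :
    C (Algebra.lmul ℤ Dfree (letter (Sum.inl 1))) * lmulPhiMSeries w =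
      (1 + X * C (Algebra.lmul ℤ Dfree (letter (Sum.inr 1)))) * lmulPhiMSeries (zO * w) := by
  ext j : 1
  rw [coeff_C_mul, add_mul, one_mul, map_add, mul_assoc X]
  rcases j with _ | n
  · rw [coeff_zero_X_mul, add_zero]
    simp only [lmulPhiMSeries, coeff_mk, PhiM, id_eq, toD1_mul, toD1_zO, map_mul]
  · rw [coeff_succ_X_mul, coeff_C_mul]
    simp only [lmulPhiMSeries, coeff_mk, ← toD1_zO, ← toD1_xiO, ← map_mul, ← toD1_mul,
      ← map_add, ← toD1_add, zO_mul_PhiM_succ]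

theorem rhoSeries_mul_lmulPhiMSeries_zO_mul (w : DOne) :
    rhoSeries * lmulPhiMSeries (zO * w) =
      letterSeries (Sum.inl 1) * (rhoSeries * lmulPhiMSeries w) := by
  refine eq_of_eq_add_mul_of_eq_mul_add (commute_X (letterSeries (Sum.inr 1))).symm
    (p := rhoSeries * C (Algebra.lmul ℤ Dfree (letter (Sum.inl 1))) * lmulPhiMSeries w)
    (q := rhoSeries * C (Algebra.lmul ℤ Dfree (letter (Sum.inr 1))) * lmulPhiMSeries (zO * w))
    ?_ ?_ ?_
  · rw [mul_assoc, C_lmul_letter_mul_lmulPhiMSeries]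
    simp only [add_mul, mul_add, one_mul, mul_assoc]
    rw [← mul_assoc rhoSeries X, (commute_X rhoSeries).eq, mul_assoc]
  · conv_lhs => rw [rhoSeries_mul_C_letter]
    simp only [add_mul, mul_assoc]
  · conv_lhs => rw [rhoSeries_mul_C_letter]
    simp only [add_mul, mul_assoc]

theorem Zmap_eq_coeff_rhoSeries_mul (s : ℕ) (w : DOne) :
    Zmap s w = coeff s (rhoSeries * lmulPhiMSeries w) 1 := by
  rw [coeff_mul, ← Finset.Nat.sum_antidiagonal_swap,
    Finset.Nat.sum_antidiagonal_eq_sum_range_succ_mk, LinearMap.coe_sum, Finset.sum_apply]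
  simp [Zmap, rhoSeries, lmulPhiMSeries, rhoEnd_apply, dPow]

theorem coeff_letterSeries_inl_one_mul (F : (Module.End ℤ Dfree)⟦X⟧) (s : ℕ) (y : Dfree) :
    coeff s (letterSeries (Sum.inl 1) * F) y =
      ∑ l ∈ range (s + 1), zOf (l + 1) * coeff (s - l) F y := by
  rw [coeff_mul, Finset.Nat.sum_antidiagonal_eq_sum_range_succ_mk, LinearMap.coe_sum,
    Finset.sum_apply]
  refine sum_congr rfl fun l _ => ?_
  simp only [letterSeries, coeff_mk, Module.End.mul_apply, Algebra.coe_lmul_eq_mul,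
    LinearMap.mul_apply_apply]
  rw [zOf, dif_pos l.succ_pos]
  rfl

/-- For every `w ∈ 𝔡₁` and every integer `s ≥ 0`,
`Z_s(z_1 w) = Σ_{ℓ=0}^{s} z_{ℓ+1} Z_{s-ℓ}(w)`. -/
theorem Z_z_mul (w : DOne) (s : ℕ) :
    Zmap s (zO * w) = ∑ l ∈ Finset.range (s + 1), zOf (l + 1) * Zmap (s - l) w := by
  rw [Zmap_eq_coeff_rhoSeries_mul, rhoSeries_mul_lmulPhiMSeries_zO_mul,
    coeff_letterSeries_inl_one_mul]
  simp only [Zmap_eq_coeff_rhoSeries_mul]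

end
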